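/- Let x₁,…,x_n ∈ ℝᵈ, let B := max_{1≤i≤n} ‖x_i‖, and let σ_x be the largest singular value of the d×n matrix X whose columns are x₁,…,x_n. Let σ : ℝ → ℝ be differentiable with derivative σ′ satisfying σ′(0) = 0 and |σ′(u) − σ′(v)| ≤ L|u − v| for all u, v ∈ ℝ. For w ∈ ℝᵈ define H(w) as the n×n real matrix with entries H(w)_{ij} = σ′(wᵀx_i) σ′(wᵀx_j) ⟨x_i, x_j⟩. Then for all w, w₀ ∈ ℝᵈ: ‖H(w) − H(w₀)‖_op ≤ L² σ_x² B² ‖w − w₀‖ (‖w − w₀‖ + 2‖w₀‖). -/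

import Mathlib

open scoped RealInnerProductSpace

/-- The spectral norm (largest singular value) of a real matrix, i.e. the operator
norm of the induced map between Euclidean spaces. -/
noncomputable def opNorm {ι κ : Type*} [Fintype ι] [Fintype κ] [DecidableEq κ]
    (A : Matrix ι κ ℝ) : ℝ :=
  ‖LinearMap.toContinuousLinearMap (Matrix.toEuclideanLin A)‖

/-!
Write `H(w) = Φ(w)ᴴ Φ(w)` with `Φ(w) = X · diag(σ′(⟪w, xᵢ⟫))`. Then
`H(w) - H(w₀) = Φ(w)ᴴ (Φ(w) - Φ(w₀)) + (Φ(w) - Φ(w₀))ᴴ Φ(w₀)`, and `Φ(w) - Φ(w₀)` is `X` times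
the diagonal of the differences `σ′(⟪w, xᵢ⟫) - σ′(⟪w₀, xᵢ⟫)`, each at most `L B ‖w - w₀‖` in
absolute value by the Lipschitz bound and Cauchy–Schwarz. Since `σ′(0) = 0`, the same bound with
`w₀ = 0` gives `‖Φ(v)‖ ≤ σₓ L B ‖v‖`, and `‖w‖ ≤ ‖w - w₀‖ + ‖w₀‖` finishes the estimate.
-/

open scoped Matrix.Norms.L2Operator
open Matrix

theorem opNorm_eq_l2_opNorm {ι κ : Type*} [Fintype ι] [Fintype κ] [DecidableEq κ]
    (A : Matrix ι κ ℝ) : opNorm A = ‖A‖ := by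
  rw [opNorm, l2_opNorm_def, LinearEquiv.trans_apply]

namespace Matrix

variable {𝕜 m n : Type*} [RCLike 𝕜] [Fintype m] [Fintype n] [DecidableEq n]

theorem l2_opNorm_mul_diagonal_le (A : Matrix m n 𝕜) (s : n → 𝕜) :
    ‖A * diagonal s‖ ≤ ‖A‖ * ‖s‖ :=
  l2_opNorm_diagonal s ▸ l2_opNorm_mul A (diagonal s)

theorem l2_opNorm_conjTranspose_mul_self_sub_le [DecidableEq m] (A B : Matrix m n 𝕜) :
    ‖Aᴴ * A - Bᴴ * B‖ ≤ ‖A‖ * ‖A - B‖ + ‖A - B‖ * ‖B‖ := by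
  have hsplit : Aᴴ * A - Bᴴ * B = Aᴴ * (A - B) + (A - B)ᴴ * B := by
    rw [conjTranspose_sub, Matrix.mul_sub, Matrix.sub_mul]
    abel
  calc ‖Aᴴ * A - Bᴴ * B‖ ≤ ‖Aᴴ‖ * ‖A - B‖ + ‖(A - B)ᴴ‖ * ‖B‖ := by
        rw [hsplit]
        exact (norm_add_le _ _).trans (add_le_add (l2_opNorm_mul _ _) (l2_opNorm_mul _ _))
    _ = ‖A‖ * ‖A - B‖ + ‖A - B‖ * ‖B‖ := by
        rw [l2_opNorm_conjTranspose, l2_opNorm_conjTranspose]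

theorem gram_smul_eq_conjTranspose_mul_self (x : n → EuclideanSpace 𝕜 m) (s : n → 𝕜) :
    gram 𝕜 (fun i => s i • x i) =
      ((of fun k i => x i k) * diagonal s)ᴴ * ((of fun k i => x i k) * diagonal s) := by
  rw [gram_eq_conjTranspose_mul (EuclideanSpace.basisFun m 𝕜)]
  congr <;> ext k i <;> simp [mul_comm]

end Matrix

theorem nonneg_of_abs_sub_le_mul_abs_sub {f : ℝ → ℝ} {L : ℝ}
    (hf : ∀ u v, |f u - f v| ≤ L * |u - v|) : 0 ≤ L := by
  simpa using (abs_nonneg _).trans (hf 1 0)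

theorem norm_comp_inner_sub_comp_inner_le {ι E : Type*} [Fintype ι] [NormedAddCommGroup E]
    [InnerProductSpace ℝ E] {f : ℝ → ℝ} {L B : ℝ} (hf : ∀ u v, |f u - f v| ≤ L * |u - v|)
    (hB : 0 ≤ B) {x : ι → E} (hx : ∀ i, ‖x i‖ ≤ B) (w w₀ : E) :
    ‖(fun i => f ⟪w, x i⟫) - fun i => f ⟪w₀, x i⟫‖ ≤ L * B * ‖w - w₀‖ := by
  have hL := nonneg_of_abs_sub_le_mul_abs_sub hf
  refine (pi_norm_le_iff_of_nonneg (by positivity)).2 fun i => ?_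
  calc |f ⟪w, x i⟫ - f ⟪w₀, x i⟫| ≤ L * |⟪w - w₀, x i⟫| := by
        rw [inner_sub_left]
        exact hf _ _
    _ ≤ L * (‖w - w₀‖ * B) := by
        gcongr
        exact (abs_real_inner_le_norm _ _).trans (by gcongr; exact hx i)
    _ = L * B * ‖w - w₀‖ := by ring

theorem stmt5_general {d n : ℕ} (x : Fin n → EuclideanSpace ℝ (Fin d))
    (B : ℝ) (hB : B = ⨆ i, ‖x i‖)
    (X : Matrix (Fin d) (Fin n) ℝ) (hX : ∀ i j, X i j = x j i)
    (σx : ℝ) (hσx : σx = opNorm X)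
    (L : ℝ) (σ : ℝ → ℝ)
    (hσ'0 : deriv σ 0 = 0)
    (hlip : ∀ u v : ℝ, |deriv σ u - deriv σ v| ≤ L * |u - v|)
    (H : EuclideanSpace ℝ (Fin d) → Matrix (Fin n) (Fin n) ℝ)
    (hH : ∀ w i j, H w i j = deriv σ (⟪w, x i⟫) * deriv σ (⟪w, x j⟫) * ⟪x i, x j⟫)
    (w w₀ : EuclideanSpace ℝ (Fin d)) :
    opNorm (H w - H w₀) ≤
      L ^ 2 * σx ^ 2 * B ^ 2 * ‖w - w₀‖ * (‖w - w₀‖ + 2 * ‖w₀‖) := by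
  set s : EuclideanSpace ℝ (Fin d) → Fin n → ℝ := fun v i => deriv σ ⟪v, x i⟫
  have hB0 : 0 ≤ B := hB ▸ Real.iSup_nonneg fun i => norm_nonneg _
  have hxB : ∀ i, ‖x i‖ ≤ B := hB ▸ le_ciSup (Set.finite_range _).bddAbove
  have hL := nonneg_of_abs_sub_le_mul_abs_sub hlip
  have hH_eq : ∀ v, H v = (X * diagonal (s v))ᴴ * (X * diagonal (s v)) := by
    intro v
    rw [show X = of fun k i => x i k from ext hX, ← gram_smul_eq_conjTranspose_mul_self]
    ext i j
    simp only [hH, gram_apply, inner_smul_right, inner_smul_left, Real.ringHom_apply, s]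
    ring
  have hs_sub : ∀ v v₀, ‖s v - s v₀‖ ≤ L * B * ‖v - v₀‖ :=
    norm_comp_inner_sub_comp_inner_le hlip hB0 hxB
  have hs : ∀ v, ‖s v‖ ≤ L * B * ‖v‖ := fun v => by
    have hs0 : s 0 = 0 := funext fun i => by simp [s, hσ'0]
    simpa [hs0] using hs_sub v 0
  have hXs : ∀ t : Fin n → ℝ, ‖X * diagonal t‖ ≤ σx * ‖t‖ := fun t => by
    simpa [hσx, opNorm_eq_l2_opNorm] using l2_opNorm_mul_diagonal_le X t
  have hσx0 : 0 ≤ σx := hσx ▸ norm_nonneg _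
  have hw : ‖w‖ ≤ ‖w - w₀‖ + ‖w₀‖ := norm_le_norm_sub_add w w₀
  rw [opNorm_eq_l2_opNorm, hH_eq, hH_eq]
  refine (l2_opNorm_conjTranspose_mul_self_sub_le _ _).trans ?_
  rw [← Matrix.mul_sub, diagonal_sub]
  calc _ ≤ σx * ‖s w‖ * (σx * ‖s w - s w₀‖) + σx * ‖s w - s w₀‖ * (σx * ‖s w₀‖) := by
        gcongr <;> apply hXs
    _ ≤ σx * (L * B * (‖w - w₀‖ + ‖w₀‖)) * (σx * (L * B * ‖w - w₀‖))
        + σx * (L * B * ‖w - w₀‖) * (σx * (L * B * ‖w₀‖)) := by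
        gcongr
        · exact (hs w).trans (by gcongr)
        · exact hs_sub w w₀
        · exact hs_sub w w₀
        · exact hs w₀
    _ = L ^ 2 * σx ^ 2 * B ^ 2 * ‖w - w₀‖ * (‖w - w₀‖ + 2 * ‖w₀‖) := by ring

/-- Supplement, Lemma 3: the perturbation of the associated Gram matrix
H(w)_{ij} = σ′(wᵀxᵢ)σ′(wᵀxⱼ)⟨xᵢ,xⱼ⟩ of a hidden unit is controlled by the movement of
its weight vector: ‖H(w) − H(w₀)‖_op ≤ L²σₓ²B² ‖w−w₀‖ (‖w−w₀‖ + 2‖w₀‖). -/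
theorem stmt5 {d n : ℕ} (x : Fin n → EuclideanSpace ℝ (Fin d))
    (B : ℝ) (hB : B = ⨆ i, ‖x i‖)
    (X : Matrix (Fin d) (Fin n) ℝ) (hX : ∀ i j, X i j = x j i)
    (σx : ℝ) (hσx : σx = opNorm X)
    (L : ℝ) (σ : ℝ → ℝ) (hσ : Differentiable ℝ σ)
    (hσ'0 : deriv σ 0 = 0)
    (hlip : ∀ u v : ℝ, |deriv σ u - deriv σ v| ≤ L * |u - v|)
    (H : EuclideanSpace ℝ (Fin d) → Matrix (Fin n) (Fin n) ℝ)
    (hH : ∀ w i j, H w i j = deriv σ (⟪w, x i⟫) * deriv σ (⟪w, x j⟫) * ⟪x i, x j⟫)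
    (w w₀ : EuclideanSpace ℝ (Fin d)) :
    opNorm (H w - H w₀) ≤
      L ^ 2 * σx ^ 2 * B ^ 2 * ‖w - w₀‖ * (‖w - w₀‖ + 2 * ‖w₀‖) :=
  stmt5_general x B hB X hX σx hσx L σ hσ'0 hlip H hH w w₀
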